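/- Let G be a finite simple graph on n vertices containing two vertex-disjoint edges, t ≥ 2, and let F = x_1^{a_1}⋯x_n^{a_n} be a monomial not contained in depol(P_t(Σ_t G)). Then deg F = Σ a_i ≤ (t−1)n − t. -/

import Mathlib

open MvPolynomial

/-- `p : Fin t → V` is a path on `t` vertices in the graph `H`. -/
def IsPathOn {V : Type*} (H : SimpleGraph V) {t : ℕ} (p : Fin t → V) : Prop :=
  Function.Injective p ∧
    ∀ (i : ℕ) (h : i + 1 < t), H.Adj (p ⟨i, by omega⟩) (p ⟨i + 1, h⟩)

/-- The `t`-path ideal of a graph. -/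
noncomputable def pathIdeal {V : Type*} (k : Type*) [CommRing k] (H : SimpleGraph V) (t : ℕ) :
    Ideal (MvPolynomial V k) :=
  Ideal.span { m | ∃ p : Fin t → V, IsPathOn H p ∧ m = ∏ i, X (p i) }

/-- The suspension `Σ_t G`: attach a path of length `t-1` to each vertex. -/
def suspension {V : Type*} (G : SimpleGraph V) (t : ℕ) : SimpleGraph (V ⊕ V × Fin (t - 1)) where
  Adj a b := match a, b with
    | .inl u, .inl v => G.Adj u v
    | .inl u, .inr (v, j) => u = v ∧ (j : ℕ) = 0
    | .inr (v, j), .inl u => u = v ∧ (j : ℕ) = 0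
    | .inr (u, i), .inr (v, j) => u = v ∧ ((i : ℕ) + 1 = j ∨ (j : ℕ) + 1 = i)
  symm := ⟨by
    rintro (u | ⟨u, i⟩) (v | ⟨v, j⟩) h
    · exact G.adj_symm h
    · exact h
    · exact h
    · exact ⟨h.1.symm, h.2.symm⟩⟩
  loopless := ⟨by
    rintro (u | ⟨u, i⟩) h
    · exact G.irrefl h
    · rcases h with ⟨-, h⟩; omega⟩

/-- The depolarization of the `t`-path ideal of `Σ_t G`, obtained by the substitution
`x_{ij} ↦ x_i`. -/
noncomputable def depolPathIdeal {V : Type*} (k : Type*) [CommRing k] (G : SimpleGraph V)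
    (t : ℕ) : Ideal (MvPolynomial V k) :=
  (pathIdeal k (suspension G t) t).map (rename (Sum.elim id Prod.fst))

/-!
In `Σ_t G` each vertex `i` carries a whisker `i, (i,0), …, (i,t-2)` of `t` vertices, which
depolarizes to `x_i^t`; for an edge `{i, j}` of `G`, going down `p` vertices of the whisker at `i`
and up `q = t - p` vertices of the whisker at `j` gives a `t`-path depolarizing to `x_i^p x_j^q`.
So a monomial `x^s` outside the ideal has `s_i ≤ t - 1` for every vertex and `s_i + s_j ≤ t - 1`
for every edge. Applying the edge bound to the two disjoint edges and the vertex bound to the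
other `n - 4` vertices gives `deg ≤ (n - 2)(t - 1) ≤ (t - 1)n - t`, the last step because `t ≥ 2`.
-/

section Whiskers

variable {V : Type*} {t : ℕ}

def whisker (i : V) (m : Fin t) : V ⊕ V × Fin (t - 1) :=
  if h : (m : ℕ) = 0 then .inl i else .inr (i, ⟨m - 1, by omega⟩)

def suspensionLevel : V ⊕ V × Fin (t - 1) → ℕ :=
  Sum.elim (fun _ => 0) fun x => x.2 + 1

@[simp]
lemma depol_whisker (i : V) (m : Fin t) : Sum.elim id Prod.fst (whisker i m) = i := by
  unfold whisker; split_ifs <;> rfl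

@[simp]
lemma suspensionLevel_whisker (i : V) (m : Fin t) : suspensionLevel (whisker i m) = m := by
  unfold whisker suspensionLevel
  split_ifs <;> simp only [Sum.elim_inl, Sum.elim_inr] <;> omega

lemma whisker_inj {i j : V} {m m' : Fin t} (h : whisker i m = whisker j m') :
    i = j ∧ m = m' :=
  ⟨by simpa using congrArg (Sum.elim id Prod.fst) h,
    Fin.ext (by simpa using congrArg suspensionLevel h)⟩

lemma suspension_adj_whisker (G : SimpleGraph V) (i : V) {m m' : Fin t}
    (h : (m : ℕ) + 1 = m' ∨ (m' : ℕ) + 1 = m) :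
    (suspension G t).Adj (whisker i m) (whisker i m') := by
  unfold whisker
  split_ifs <;> first | omega | exact ⟨rfl, by simp only; omega⟩

lemma isPathOn_whisker (G : SimpleGraph V) (i : V) :
    IsPathOn (suspension G t) (whisker (t := t) i) :=
  ⟨fun _ _ h => (whisker_inj h).2, fun _ _ => suspension_adj_whisker G i (Or.inl rfl)⟩

def whiskerPair (i j : V) (p q : ℕ) (m : Fin (p + q)) : V ⊕ V × Fin (p + q - 1) :=
  if (m : ℕ) < p then whisker i ⟨p - 1 - m, by omega⟩ else whisker j ⟨m - p, by omega⟩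

lemma isPathOn_whiskerPair {G : SimpleGraph V} {i j : V} (hij : G.Adj i j) (p q : ℕ) :
    IsPathOn (suspension G (p + q)) (whiskerPair i j p q) := by
  refine ⟨fun m m' h => ?_, fun m hm => ?_⟩
  · unfold whiskerPair at h
    split_ifs at h with hm hm' hm' <;> have := whisker_inj h <;> simp only [Fin.mk.injEq] at this
    exacts [Fin.ext (by omega), absurd this.1 hij.ne, absurd this.1.symm hij.ne, Fin.ext (by omega)]
  · simp only [whiskerPair]
    split_ifs with h h' h'
    · exact suspension_adj_whisker G i (by simp only; omega)
    · have hm : m + 1 = p := by omega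
      subst hm
      simp only [whisker, add_tsub_cancel_right, tsub_self]
      exact hij
    · omega
    · exact suspension_adj_whisker G j (by simp only; omega)

end Whiskers

section Membership

variable {V k : Type*} [CommRing k] {G : SimpleGraph V}

lemma prod_X_mem_depolPathIdeal {t : ℕ} {p : Fin t → V ⊕ V × Fin (t - 1)}
    (hp : IsPathOn (suspension G t) p) :
    (∏ m, X (Sum.elim id Prod.fst (p m)) : MvPolynomial V k) ∈ depolPathIdeal k G t := by
  have h : ∏ m, X (p m) ∈ pathIdeal k (suspension G t) t := Ideal.subset_span ⟨p, hp, rfl⟩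
  simpa [depolPathIdeal] using Ideal.mem_map_of_mem (rename (Sum.elim id Prod.fst)) h

lemma X_pow_mem_depolPathIdeal (t : ℕ) (i : V) :
    (X i ^ t : MvPolynomial V k) ∈ depolPathIdeal k G t := by
  simpa using prod_X_mem_depolPathIdeal (k := k) (isPathOn_whisker G (t := t) i)

lemma X_pow_mul_X_pow_mem_depolPathIdeal {i j : V} (hij : G.Adj i j) (p q : ℕ) :
    (X i ^ p * X j ^ q : MvPolynomial V k) ∈ depolPathIdeal k G (p + q) := by
  have h := prod_X_mem_depolPathIdeal (k := k) (isPathOn_whiskerPair hij p q)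
  rw [Fin.prod_univ_add] at h
  simpa [whiskerPair] using h

end Membership

section Monomials

variable {σ k : Type*} [CommSemiring k]

lemma X_pow_dvd_monomial {s : σ →₀ ℕ} {i : σ} {p : ℕ} (hp : p ≤ s i) :
    (X i ^ p : MvPolynomial σ k) ∣ monomial s 1 := by
  rw [X_pow_eq_monomial, monomial_dvd_monomial]
  exact ⟨Or.inr (Finsupp.single_le_iff.mpr hp), dvd_rfl⟩

lemma X_pow_mul_X_pow_dvd_monomial {s : σ →₀ ℕ} {i j : σ} (hij : i ≠ j) {p q : ℕ}
    (hp : p ≤ s i) (hq : q ≤ s j) :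
    (X i ^ p * X j ^ q : MvPolynomial σ k) ∣ monomial s 1 := by
  classical
  rw [X_pow_eq_monomial, X_pow_eq_monomial, monomial_mul, one_mul, monomial_dvd_monomial]
  refine ⟨Or.inr fun x => ?_, dvd_rfl⟩
  simp only [Finsupp.add_apply, Finsupp.single_apply]
  split_ifs <;> subst_vars <;> first | omega | exact absurd rfl hij

end Monomials

section Exponents

variable {V k : Type*} [CommRing k] {G : SimpleGraph V} {t : ℕ} {s : V →₀ ℕ}

lemma lt_of_monomial_notMem_depolPathIdeal (hs : monomial s (1 : k) ∉ depolPathIdeal k G t)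
    (i : V) : s i < t := by
  by_contra! h
  exact hs (Ideal.mem_of_dvd _ (X_pow_dvd_monomial h) (X_pow_mem_depolPathIdeal t i))

lemma add_lt_of_monomial_notMem_depolPathIdeal
    (hs : monomial s (1 : k) ∉ depolPathIdeal k G t) {i j : V} (hij : G.Adj i j) :
    s i + s j < t := by
  by_contra! h
  have hi := lt_of_monomial_notMem_depolPathIdeal hs i
  have hmem := X_pow_mul_X_pow_mem_depolPathIdeal (k := k) hij (s i) (t - s i)
  rw [Nat.add_sub_cancel' hi.le] at hmem
  exact hs (Ideal.mem_of_dvd _ (X_pow_mul_X_pow_dvd_monomial hij.ne le_rfl (by omega)) hmem)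

end Exponents

lemma sum_add_two_mul_le_card_mul {ι : Type*} [Fintype ι] (f : ι → ℕ) {m : ℕ}
    (hf : ∀ i, f i ≤ m) {a b c d : ι} (hab : a ≠ b) (hcd : c ≠ d)
    (hdisj : a ≠ c ∧ a ≠ d ∧ b ≠ c ∧ b ≠ d) (habm : f a + f b ≤ m) (hcdm : f c + f d ≤ m) :
    ∑ i, f i + 2 * m ≤ Fintype.card ι * m := by
  classical
  obtain ⟨hac, had, hbc, hbd⟩ := hdisj
  set T : Finset ι := {a, b, c, d}
  have hT : ∑ i ∈ T, f i = (f a + f b) + (f c + f d) := by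
    simp [T, Finset.sum_insert, hab, hac, had, hbc, hbd, hcd, add_assoc]
  have hcard : T.card = 4 := by
    simp [T, Finset.card_insert_of_notMem, hab, hac, had, hbc, hbd, hcd]
  have hcompl : ∑ i ∈ Tᶜ, f i ≤ Tᶜ.card * m := by
    simpa using Finset.sum_le_card_nsmul Tᶜ f m fun i _ => hf i
  rw [← Finset.sum_add_sum_compl T, ← Finset.card_compl_add_card T, hcard]
  linarith

/-- If `G` contains two vertex-disjoint edges and `t ≥ 2`, then every monomial
`x_1^{a_1} ⋯ x_n^{a_n}` not in the depolarized `t`-path ideal of `Σ_t G` has degree at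
most `(t−1)n − t`. -/
theorem stmt10 {k : Type*} [Field k] {n : ℕ} (G : SimpleGraph (Fin n)) (t : ℕ) (ht : 2 ≤ t)
    (a b c d : Fin n) (h1 : G.Adj a b) (h2 : G.Adj c d)
    (hdisj : a ≠ c ∧ a ≠ d ∧ b ≠ c ∧ b ≠ d)
    (s : Fin n →₀ ℕ)
    (hF : (monomial s (1 : k)) ∉ depolPathIdeal k G t) :
    ((s.sum fun _ e => e : ℕ) : ℤ) ≤ ((t : ℤ) - 1) * (n : ℤ) - (t : ℤ) := by
  have hab := add_lt_of_monomial_notMem_depolPathIdeal hF h1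
  have hcd := add_lt_of_monomial_notMem_depolPathIdeal hF h2
  have hsum := sum_add_two_mul_le_card_mul s
    (fun i => Nat.le_sub_one_of_lt (lt_of_monomial_notMem_depolPathIdeal hF i))
    h1.ne h2.ne hdisj (by omega) (by omega)
  rw [Fintype.card_fin] at hsum
  rw [Finsupp.sum_fintype s _ fun _ => rfl]
  zify [show 1 ≤ t by omega] at hsum
  push_cast
  linarith
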